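/- arXiv:1412.7693 — 4 statements merged into one kernel-verified Lean document; each statement's English description precedes it below -/
import Mathlib

section
/- Given an optimal Steiner forest F* and the final clustering C^f of the gluttonous algorithm, there exists a feasible solution F** with cost(F**) ≤ cost(F*) + width(F*) ≤ 2·cost(F*) such that F** is faithful to C^f, i.e., every supernode of C^f is contained in a single tree of F**. -/
open scoped Classical

/-- The cost of a chain of vertices, where a step within a supernode is free and a
step between supernodes costs the underlying metric distance. -/
noncomputable def chainCost {V ι : Type*} (d : V → V → ℝ) (cl : V → ι) : List V → ℝ
  | [] => 0
  | [_] => 0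
  | a :: b :: rest => (if cl a = cl b then 0 else d a b) + chainCost d cl (b :: rest)

/-- The `C`-punctured distance `d_{M/C}(u,v)`. -/
noncomputable def pDist {V ι : Type*} (d : V → V → ℝ) (cl : V → ι) (u v : V) : ℝ :=
  sInf {x | ∃ l : List V, l.head? = some u ∧ l.getLast? = some v ∧ x = chainCost d cl l}

/-- The punctured distance between two supernodes. -/
noncomputable def superDist {V ι : Type*} (d : V → V → ℝ) (cl : V → ι) (A B : ι) : ℝ :=
  sInf {x | ∃ u v, cl u = A ∧ cl v = B ∧ x = pDist d cl u v}

/-- A supernode is active if it contains one endpoint of some demand pair but not the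
other (i.e., some terminal in it is not yet connected to its mate). -/
def isActive {V : Type*} (D : Finset (V × V)) (c : V → ℕ) (i : ℕ) : Prop :=
  ∃ p ∈ D, (c p.1 = i ∧ c p.2 ≠ i) ∨ (c p.2 = i ∧ c p.1 ≠ i)

/-- A (terminating) run of the gluttonous algorithm on the instance `(d, D)`:
starting from the trivial clustering, at each step the two closest active supernodes
are merged, until no active supernode remains. -/
structure GRun (V : Type*) [Fintype V] (d : V → V → ℝ) (D : Finset (V × V)) where
  steps : ℕ
  cl : ℕ → V → ℕ
  S : ℕ → ℕ
  T : ℕ → ℕ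
  /-- initially every vertex is its own supernode -/
  init : ∀ u v : V, cl 0 u = cl 0 v → u = v
  distinct : ∀ t < steps, S t ≠ T t
  activeS : ∀ t < steps, isActive D (cl t) (S t)
  activeT : ∀ t < steps, isActive D (cl t) (T t)
  /-- the merged pair is at minimum punctured distance among active pairs -/
  min_dist : ∀ t < steps, ∀ A B, isActive D (cl t) A → isActive D (cl t) B → A ≠ B →
    superDist d (cl t) (S t) (T t) ≤ superDist d (cl t) A B
  /-- merging rule -/
  merge : ∀ t < steps, ∀ v, cl (t + 1) v = if cl t v = T t then S t else cl t v
  /-- at the end no supernode is active -/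
  final : ∀ i, ¬ isActive D (cl steps) i

/-- The cost of a forest: the total length of its edges. -/
noncomputable def gcost {V : Type*} [Fintype V] (w : Sym2 V → ℝ) (G : SimpleGraph V) : ℝ :=
  ∑ e ∈ G.edgeFinset, w e

/-- The total weight of a walk. -/
noncomputable def walkWeight {V : Type*} {G : SimpleGraph V} (w : Sym2 V → ℝ)
    {u v : V} (p : G.Walk u v) : ℝ :=
  (p.edges.map w).sum

/-- The tree distance between two vertices of a forest. -/
noncomputable def treeDist {V : Type*} (G : SimpleGraph V) (w : Sym2 V → ℝ)
    (u v : V) : ℝ :=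
  sInf {x | ∃ p : G.Walk u v, p.IsPath ∧ x = walkWeight w p}

/-- The width of the tree of `G` containing a connected component `c`. -/
noncomputable def compWidth {V : Type*} [Fintype V] (G : SimpleGraph V)
    (w : Sym2 V → ℝ) (D : Finset (V × V)) (c : G.ConnectedComponent) : ℝ :=
  sSup {x | ∃ p ∈ D, G.connectedComponentMk p.1 = c ∧ x = treeDist G w p.1 p.2}

/-- The width of a forest: the sum of the widths of its trees. -/
noncomputable def gwidth {V : Type*} [Fintype V] (w : Sym2 V → ℝ) (G : SimpleGraph V)
    (D : Finset (V × V)) : ℝ :=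
  ∑ c : G.ConnectedComponent, compWidth G w D c


/-! Run the algorithm alongside a supergraph `F` of `F*`, starting from `F = F*`. When the
algorithm merges two supernodes that `F` does not yet join, add the inter-supernode edges of a
cheapest chain between them. By greediness its cost is at most the width of the `F*`-tree of a
terminal in either supernode, since that terminal's mate lies in another active supernode. Charge
it to the narrower of the widest uncharged trees in the two components of `F` being joined: each
tree of `F*` is charged at most once, so the added cost is at most `width(F*)`, which is at most
`cost(F*)` because each tree contains a path between every demand pair it serves. -/

open SimpleGraph

lemma Finset.sum_union_le_of_nonneg {α : Type*} [DecidableEq α] {f : α → ℝ}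
    (hf : ∀ a, 0 ≤ f a) (s t : Finset α) :
    ∑ x ∈ s ∪ t, f x ≤ (∑ x ∈ s, f x) + ∑ x ∈ t, f x := by
  rw [← Finset.sum_union_inter]
  exact le_add_of_nonneg_right (Finset.sum_nonneg fun a _ => hf a)

lemma List.exists_eq_append_cons_append_cons_of_not_nodup {α : Type*} {l : List α}
    (h : ¬ l.Nodup) : ∃ a l₁ l₂ l₃, l = l₁ ++ a :: (l₂ ++ a :: l₃) := by
  obtain ⟨a, ha⟩ : ∃ a, List.Sublist [a, a] l := by simpa [List.nodup_iff_sublist] using h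
  obtain ⟨r₁, r₂, rfl, h₁, h₂⟩ := List.cons_sublist_iff.mp ha
  obtain ⟨l₁, l₂, rfl⟩ := List.append_of_mem h₁
  obtain ⟨l₃, l₄, rfl⟩ := List.append_of_mem (List.singleton_sublist.mp h₂)
  exact ⟨a, l₁, l₂ ++ l₃, l₄, by simp⟩

section Chains

variable {V ι : Type*} {d : V → V → ℝ} {cl : V → ι}

lemma chainCost_nonneg (hd : ∀ u v, 0 ≤ d u v) : ∀ l : List V, 0 ≤ chainCost d cl l
  | [] | [_] => le_rfl
  | a :: b :: r => add_nonneg (by split_ifs <;> simp [hd]) (chainCost_nonneg hd (b :: r))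

lemma chainCost_append_cons : ∀ (l₁ : List V) (a : V) (l₂ : List V),
    chainCost d cl (l₁ ++ a :: l₂) = chainCost d cl (l₁ ++ [a]) + chainCost d cl (a :: l₂)
  | [], _, _ => by simp [chainCost]
  | [_], _, _ => by simp [chainCost]
  | b :: c :: l₁, a, l₂ => by
      have ih := chainCost_append_cons (c :: l₁) a l₂
      simp only [List.cons_append, chainCost] at ih ⊢
      rw [ih]
      ring

lemma chainCost_remove_loop_le (hd : ∀ u v, 0 ≤ d u v) (l₁ l₂ l₃ : List V) (a : V) :
    chainCost d cl (l₁ ++ a :: l₃) ≤ chainCost d cl (l₁ ++ a :: (l₂ ++ a :: l₃)) := by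
  have hloop := chainCost_append_cons (d := d) (cl := cl) (a :: l₂) a l₃
  rw [chainCost_append_cons l₁ a l₃, chainCost_append_cons l₁ a (l₂ ++ a :: l₃)]
  simp only [List.cons_append] at hloop
  linarith [chainCost_nonneg (cl := cl) hd (a :: (l₂ ++ [a]))]

lemma exists_nodup_chain_le (hd : ∀ u v, 0 ≤ d u v) (l : List V) :
    ∃ l' : List V, l'.Nodup ∧ l'.head? = l.head? ∧ l'.getLast? = l.getLast? ∧
      chainCost d cl l' ≤ chainCost d cl l := by
  induction hn : l.length using Nat.strong_induction_on generalizing l with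
  | _ n ih =>
    by_cases h : l.Nodup
    · exact ⟨l, h, rfl, rfl, le_rfl⟩
    obtain ⟨a, l₁, l₂, l₃, rfl⟩ := List.exists_eq_append_cons_append_cons_of_not_nodup h
    obtain ⟨l', hnd, hhead, hlast, hle⟩ := ih _ (by simp [← hn]) (l₁ ++ a :: l₃) rfl
    refine ⟨l', hnd, ?_, ?_, hle.trans (chainCost_remove_loop_le hd l₁ l₂ l₃ a)⟩
    · rw [hhead]; cases l₁ <;> simp
    · rw [hlast, List.getLast?_append_cons, List.getLast?_append_cons]
      induction l₂ <;> simp_all [List.getLast?_cons]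

variable [Fintype V]

/-- Loops can be cut out of chains, so the infimum defining `pDist` is a minimum over the
finitely many duplicate-free chains. -/
lemma isLeast_pDist (hd : ∀ u v, 0 ≤ d u v) (u v : V) :
    IsLeast {x | ∃ l : List V, l.head? = some u ∧ l.getLast? = some v ∧ x = chainCost d cl l}
      (pDist d cl u v) := by
  have hfin : {l : List V | l.Nodup ∧ l.head? = some u ∧ l.getLast? = some v}.Finite :=
    (List.finite_length_le V (Fintype.card V)).subset fun l hl => hl.1.length_le_card
  obtain ⟨l₀, hnd₀, hhead₀, hlast₀, -⟩ := exists_nodup_chain_le (cl := cl) hd [u, v]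
  obtain ⟨l, ⟨-, hhead, hlast⟩, hmin⟩ :=
    Set.exists_min_image _ (chainCost d cl) hfin ⟨l₀, hnd₀, hhead₀, hlast₀⟩
  have hleast : IsLeast {x | ∃ l : List V, l.head? = some u ∧ l.getLast? = some v ∧
      x = chainCost d cl l} (chainCost d cl l) := by
    refine ⟨⟨l, hhead, hlast, rfl⟩, ?_⟩
    rintro _ ⟨l', hhead', hlast', rfl⟩
    obtain ⟨l'', hnd'', hhead'', hlast'', hle⟩ := exists_nodup_chain_le (cl := cl) hd l'
    exact (hmin l'' ⟨hnd'', hhead''.trans hhead', hlast''.trans hlast'⟩).trans hle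
  rwa [pDist, hleast.csInf_eq]

lemma pDist_le_chainCost (hd : ∀ u v, 0 ≤ d u v) {u v : V} {l : List V}
    (hu : l.head? = some u) (hv : l.getLast? = some v) : pDist d cl u v ≤ chainCost d cl l :=
  (isLeast_pDist hd u v).2 ⟨l, hu, hv, rfl⟩

lemma isLeast_superDist {A B : ι} (hA : ∃ u, cl u = A) (hB : ∃ v, cl v = B) :
    IsLeast {x | ∃ u v, cl u = A ∧ cl v = B ∧ x = pDist d cl u v} (superDist d cl A B) := by
  obtain ⟨u₀, hu₀⟩ := hA
  obtain ⟨v₀, hv₀⟩ := hB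
  obtain ⟨⟨u, v⟩, ⟨hu, hv⟩, hmin⟩ := Set.exists_min_image
    {p : V × V | cl p.1 = A ∧ cl p.2 = B} (fun p => pDist d cl p.1 p.2) (Set.toFinite _)
    ⟨(u₀, v₀), hu₀, hv₀⟩
  have hleast : IsLeast {x | ∃ u v, cl u = A ∧ cl v = B ∧ x = pDist d cl u v}
      (pDist d cl u v) := by
    refine ⟨⟨u, v, hu, hv, rfl⟩, ?_⟩
    rintro _ ⟨u', v', hu', hv', rfl⟩
    exact hmin (u', v') ⟨hu', hv'⟩
  rwa [superDist, hleast.csInf_eq]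

lemma superDist_le_pDist (u v : V) : superDist d cl (cl u) (cl v) ≤ pDist d cl u v :=
  (isLeast_superDist ⟨u, rfl⟩ ⟨v, rfl⟩).2 ⟨u, v, rfl, rfl, rfl⟩

lemma exists_chain_eq_superDist (hd : ∀ u v, 0 ≤ d u v) {A B : ι} (hA : ∃ u, cl u = A)
    (hB : ∃ v, cl v = B) :
    ∃ (l : List V) (u v : V), cl u = A ∧ cl v = B ∧ l.head? = some u ∧
      l.getLast? = some v ∧ chainCost d cl l = superDist d cl A B := by
  obtain ⟨⟨u, v, hu, hv, hpDist⟩, -⟩ := isLeast_superDist (d := d) hA hB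
  obtain ⟨⟨l, hhead, hlast, hcost⟩, -⟩ := isLeast_pDist (cl := cl) hd u v
  exact ⟨l, u, v, hu, hv, hhead, hlast, by rw [← hcost, hpDist]⟩

end Chains

noncomputable def chainEdges {V ι : Type*} (cl : V → ι) : List V → Finset (Sym2 V)
  | [] | [_] => ∅
  | a :: b :: rest => (if cl a = cl b then ∅ else {s(a, b)}) ∪ chainEdges cl (b :: rest)

section Costs

variable {V ι : Type*} {d : V → V → ℝ} {cl : V → ι} {w : Sym2 V → ℝ}

lemma weight_nonneg (hd : ∀ u v, 0 ≤ d u v) (hwd : ∀ u v : V, w s(u, v) = d u v)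
    (e : Sym2 V) : 0 ≤ w e :=
  Sym2.ind (fun u v => hwd u v ▸ hd u v) e

lemma sum_chainEdges_le (hd : ∀ u v, 0 ≤ d u v) (hwd : ∀ u v : V, w s(u, v) = d u v) :
    ∀ l : List V, ∑ e ∈ chainEdges cl l, w e ≤ chainCost d cl l
  | [] | [_] => by simp [chainEdges, chainCost]
  | a :: b :: r => by
      rw [chainEdges, chainCost]
      refine (Finset.sum_union_le_of_nonneg (weight_nonneg hd hwd) _ _).trans
        (add_le_add ?_ (sum_chainEdges_le hd hwd (b :: r)))
      split_ifs <;> simp [hwd]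

lemma reachable_sup_fromEdgeSet_chainEdges {F : SimpleGraph V}
    (hF : ∀ u v, cl u = cl v → F.Reachable u v) :
    ∀ {l : List V} {u v : V}, l.head? = some u → l.getLast? = some v →
      (F ⊔ fromEdgeSet ↑(chainEdges cl l)).Reachable u v
  | [a], u, v, hu, hv => by
      obtain rfl : a = u := by simpa using hu
      obtain rfl : a = v := by simpa using hv
      rfl
  | a :: b :: r, u, v, hu, hv => by
      obtain rfl : a = u := by simpa using hu
      have hstep : (F ⊔ fromEdgeSet ↑(chainEdges cl (a :: b :: r))).Reachable a b := by
        by_cases h : cl a = cl b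
        · exact (hF a b h).mono le_sup_left
        · have hab : a ≠ b := fun hab => h (congrArg cl hab)
          refine (Adj.reachable ?_).mono le_sup_right
          simp [chainEdges, h, hab]
      have hmono : F ⊔ fromEdgeSet ↑(chainEdges cl (b :: r))
          ≤ F ⊔ fromEdgeSet ↑(chainEdges cl (a :: b :: r)) := by
        refine sup_le_sup_left (fromEdgeSet_mono ?_) _
        simp [chainEdges]
      exact hstep.trans ((reachable_sup_fromEdgeSet_chainEdges hF rfl
        (by simpa [List.getLast?_cons] using hv)).mono hmono)

variable [Fintype V]

lemma gcost_le_sum_of_edgeSet_subset (hw : ∀ e, 0 ≤ w e) {G : SimpleGraph V}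
    {E : Finset (Sym2 V)} (hE : G.edgeSet ⊆ ↑E) : gcost w G ≤ ∑ e ∈ E, w e :=
  Finset.sum_le_sum_of_subset_of_nonneg (fun _ he => hE (mem_edgeFinset.mp he))
    fun e _ _ => hw e

lemma gcost_fromEdgeSet_chainEdges_le (hd : ∀ u v, 0 ≤ d u v)
    (hwd : ∀ u v : V, w s(u, v) = d u v) (l : List V) :
    gcost w (fromEdgeSet ↑(chainEdges cl l)) ≤ chainCost d cl l :=
  (gcost_le_sum_of_edgeSet_subset (weight_nonneg hd hwd)
    (by simp [edgeSet_fromEdgeSet])).trans (sum_chainEdges_le hd hwd l)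

lemma gcost_sup_le (hw : ∀ e, 0 ≤ w e) (F G : SimpleGraph V) :
    gcost w (F ⊔ G) ≤ gcost w F + gcost w G :=
  (gcost_le_sum_of_edgeSet_subset hw (E := F.edgeFinset ∪ G.edgeFinset)
    (by simp [edgeSet_sup])).trans (Finset.sum_union_le_of_nonneg hw _ _)

end Costs

section TreeDistances

variable {V : Type*} {w : Sym2 V → ℝ} {G : SimpleGraph V}

lemma walkWeight_nonneg (hw : ∀ e, 0 ≤ w e) {u v : V} (p : G.Walk u v) :
    0 ≤ walkWeight w p :=
  List.sum_nonneg fun _ hx => by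
    obtain ⟨e, -, rfl⟩ := List.mem_map.mp hx
    exact hw e

lemma walkWeight_reverse {u v : V} (p : G.Walk u v) : walkWeight w p.reverse = walkWeight w p := by
  simp [walkWeight, Walk.edges_reverse, List.sum_reverse]

lemma chainCost_support_le {ι : Type*} {d : V → V → ℝ} (cl : V → ι)
    (hd : ∀ u v, 0 ≤ d u v) (hwd : ∀ u v : V, w s(u, v) = d u v) {a b : V} (p : G.Walk a b) :
    chainCost d cl p.support ≤ walkWeight w p := by
  induction p with
  | nil => simp [chainCost, walkWeight]
  | @cons u x y h q ih =>
    have hstep : (if cl u = cl x then 0 else d u x) ≤ w s(u, x) := by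
      split_ifs <;> simp [hwd, hd]
    rw [Walk.support_cons, ← q.cons_tail_support, chainCost, q.cons_tail_support]
    simp only [walkWeight, Walk.edges_cons, List.map_cons, List.sum_cons] at ih ⊢
    linarith

lemma treeDist_le_walkWeight (hw : ∀ e, 0 ≤ w e) {u v : V} {p : G.Walk u v} (hp : p.IsPath) :
    treeDist G w u v ≤ walkWeight w p :=
  csInf_le ⟨0, by rintro _ ⟨q, -, rfl⟩; exact walkWeight_nonneg hw q⟩ ⟨p, hp, rfl⟩

lemma treeDist_comm (u v : V) : treeDist G w u v = treeDist G w v u := by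
  unfold treeDist
  congr 1
  ext x
  constructor <;> rintro ⟨p, hp, rfl⟩ <;>
    exact ⟨p.reverse, hp.reverse, (walkWeight_reverse p).symm⟩

lemma pDist_le_treeDist {ι : Type*} {d : V → V → ℝ} (cl : V → ι)
    (hd : ∀ u v, 0 ≤ d u v) (hwd : ∀ u v : V, w s(u, v) = d u v) [Fintype V] {u v : V}
    (h : G.Reachable u v) :
    pDist d cl u v ≤ treeDist G w u v := by
  obtain ⟨q⟩ := h
  refine le_csInf ⟨_, q.toPath.1, q.toPath.2, rfl⟩ ?_
  rintro _ ⟨p, -, rfl⟩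
  refine (pDist_le_chainCost hd ?_ ?_).trans (chainCost_support_le cl hd hwd p)
  · rw [← p.cons_tail_support]; rfl
  · rw [List.getLast?_eq_some_getLast (by simp), p.getLast_support]

variable [Fintype V] {D : Finset (V × V)}

lemma treeDist_le_compWidth {p : V × V} (hp : p ∈ D) :
    treeDist G w p.1 p.2 ≤ compWidth G w D (G.connectedComponentMk p.1) := by
  refine le_csSup ?_ ⟨p, hp, rfl, rfl⟩
  refine ((D.finite_toSet.image fun p : V × V => treeDist G w p.1 p.2).subset ?_).bddAbove
  rintro _ ⟨p, hp, -, rfl⟩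
  exact ⟨p, hp, rfl⟩

lemma compWidth_nonneg (hw : ∀ e, 0 ≤ w e) (c : G.ConnectedComponent) :
    0 ≤ compWidth G w D c :=
  Real.sSup_nonneg fun _ ⟨_, _, _, hx⟩ =>
    hx ▸ Real.sInf_nonneg fun _ ⟨p, _, hy⟩ => hy ▸ walkWeight_nonneg hw p

/-- The width of a tree is at most its cost, because each demand pair is joined by a path
inside the tree. -/
lemma gwidth_le_gcost (hw : ∀ e, 0 ≤ w e) (hsol : ∀ p ∈ D, G.Reachable p.1 p.2) :
    gwidth w G D ≤ gcost w G := by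
  classical
  let edgeComp : Sym2 V → G.ConnectedComponent := fun e => G.connectedComponentMk (Quot.out e).1
  rw [gwidth, gcost, ← Finset.sum_fiberwise_of_maps_to (g := edgeComp)
    (fun e _ => Finset.mem_univ _)]
  refine Finset.sum_le_sum fun c _ => Real.sSup_le ?_ (Finset.sum_nonneg fun e _ => hw e)
  rintro _ ⟨p, hp, rfl, rfl⟩
  obtain ⟨q, hq⟩ := (hsol p hp).some.toPath
  refine (treeDist_le_walkWeight hw hq).trans ?_
  rw [walkWeight, ← List.sum_toFinset _ hq.edges_nodup]
  refine Finset.sum_le_sum_of_subset_of_nonneg (fun e he => ?_) fun e _ _ => hw e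
  rw [List.mem_toFinset] at he
  refine Finset.mem_filter.mpr ⟨mem_edgeFinset.mpr (q.edges_subset_edgeSet he), ?_⟩
  have hout : s((Quot.out e).1, (Quot.out e).2) = e := Quot.out_eq e
  rw [← hout] at he
  exact ConnectedComponent.eq.mpr ⟨(q.takeUntil _ (q.fst_mem_support_of_mem_edges he)).reverse⟩

end TreeDistances

section WidthCharging

variable {V : Type*} [Fintype V] {w : Sym2 V → ℝ} {D : Finset (V × V)} {Fs : SimpleGraph V}

noncomputable def widthAt (Fs : SimpleGraph V) (w : Sym2 V → ℝ) (D : Finset (V × V)) (x : V) :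
    ℝ :=
  compWidth Fs w D (Fs.connectedComponentMk x)

/-- A supergraph `F` of `Fs` whose extra cost has been paid for by the widths of the trees of
`Fs` outside `U`, such that every component of `F` still contains a tree in `U` of maximal
width among the trees of `Fs` it contains. -/
structure Augmentation (w : Sym2 V → ℝ) (D : Finset (V × V)) (Fs : SimpleGraph V) where
  F : SimpleGraph V
  U : Finset Fs.ConnectedComponent
  le : Fs ≤ F
  cost_add_le : gcost w F + ∑ c ∈ U, compWidth Fs w D c ≤ gcost w Fs + gwidth w Fs D
  exists_max : ∀ x, ∃ y, F.Reachable x y ∧ Fs.connectedComponentMk y ∈ U ∧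
    ∀ z, F.Reachable x z → widthAt Fs w D z ≤ widthAt Fs w D y

lemma exists_reachable_widthAt_max (F : SimpleGraph V) (x : V) :
    ∃ y, F.Reachable x y ∧
      ∀ z, F.Reachable x z → widthAt Fs w D z ≤ widthAt Fs w D y := by
  obtain ⟨y, hy, hmax⟩ := Finset.exists_max_image ({z | F.Reachable x z} : Finset V)
    (widthAt Fs w D) ⟨x, by simp⟩
  exact ⟨y, by simpa using hy, fun z hz => hmax z (by simpa using hz)⟩

namespace Augmentation

noncomputable def initial : Augmentation w D Fs where
  F := Fs
  U := Finset.univ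
  le := le_rfl
  cost_add_le := by rw [gwidth]
  exists_max x := by
    obtain ⟨y, hxy, hmax⟩ := exists_reachable_widthAt_max Fs x
    exact ⟨y, hxy, Finset.mem_univ _, hmax⟩

/-- Adding `H` is paid for by the width of the tree of `a`, which stops being a candidate
maximum: the component of `a` now also contains the tree of `b`, which is at least as wide. -/
lemma exists_extend_of_widthAt_le (A : Augmentation w D Fs) (hw : ∀ e, 0 ≤ w e)
    (H : SimpleGraph V) {a b : V} (hab : (A.F ⊔ H).Reachable a b)
    (haU : Fs.connectedComponentMk a ∈ A.U)
    (hbU : Fs.connectedComponentMk b ∈ A.U)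
    (hne : Fs.connectedComponentMk a ≠ Fs.connectedComponentMk b)
    (hwidth : widthAt Fs w D a ≤ widthAt Fs w D b) (hcost : gcost w H ≤ widthAt Fs w D a) :
    ∃ B : Augmentation w D Fs, B.F = A.F ⊔ H := by
  refine ⟨⟨A.F ⊔ H, A.U.erase (Fs.connectedComponentMk a), A.le.trans le_sup_left, ?_, ?_⟩,
    rfl⟩
  · rw [Finset.sum_erase_eq_sub haU]
    unfold widthAt at hcost
    linarith [gcost_sup_le hw A.F H, A.cost_add_le]
  · intro x
    obtain ⟨y, hxy, hmax⟩ := 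
      exists_reachable_widthAt_max (Fs := Fs) (w := w) (D := D) (A.F ⊔ H) x
    obtain ⟨r, hyr, hrU, hrmax⟩ := A.exists_max y
    have hxr : (A.F ⊔ H).Reachable x r := hxy.trans (hyr.mono le_sup_left)
    have hyr_width := hrmax y .rfl
    by_cases hra : Fs.connectedComponentMk r = Fs.connectedComponentMk a
    · have hrw : widthAt Fs w D r = widthAt Fs w D a := by rw [widthAt, hra, widthAt]
      refine ⟨b, ?_, Finset.mem_erase.mpr ⟨hne.symm, hbU⟩, fun z hz => ?_⟩
      · exact hxr.trans (((ConnectedComponent.eq.mp hra).mono A.le).mono le_sup_left |>.trans hab)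
      · linarith [hmax z hz]
    · exact ⟨r, hxr, Finset.mem_erase.mpr ⟨hra, hrU⟩,
        fun z hz => (hmax z hz).trans hyr_width⟩

lemma exists_extend (A : Augmentation w D Fs) (hw : ∀ e, 0 ≤ w e) (H : SimpleGraph V)
    {u v : V} (huv : (A.F ⊔ H).Reachable u v) (hnot : ¬ A.F.Reachable u v)
    (hu : ∃ x, A.F.Reachable u x ∧ gcost w H ≤ widthAt Fs w D x)
    (hv : ∃ y, A.F.Reachable v y ∧ gcost w H ≤ widthAt Fs w D y) :
    ∃ B : Augmentation w D Fs, B.F = A.F ⊔ H := by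
  obtain ⟨x, hux, hx⟩ := hu
  obtain ⟨y, hvy, hy⟩ := hv
  obtain ⟨a, hua, haU, hamax⟩ := A.exists_max u
  obtain ⟨b, hvb, hbU, hbmax⟩ := A.exists_max v
  have hne : Fs.connectedComponentMk a ≠ Fs.connectedComponentMk b := fun h =>
    hnot (hua.trans (((ConnectedComponent.eq.mp h).mono A.le).trans hvb.symm))
  have hab : (A.F ⊔ H).Reachable a b :=
    (hua.symm.mono le_sup_left).trans (huv.trans (hvb.mono le_sup_left))
  rcases le_total (widthAt Fs w D a) (widthAt Fs w D b) with h | h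
  · exact A.exists_extend_of_widthAt_le hw H hab haU hbU hne h (hx.trans (hamax x hux))
  · exact A.exists_extend_of_widthAt_le hw H hab.symm hbU haU hne.symm h (hy.trans (hbmax y hvy))

end Augmentation

end WidthCharging

lemma reachable_of_merge {V ι : Type*} [DecidableEq ι] {F : SimpleGraph V} {cl cl' : V → ι}
    {S T : ι}
    (hcl : ∀ u v, cl u = cl v → F.Reachable u v)
    (hmerge : ∀ v, cl' v = if cl v = T then S else cl v) {u₀ v₀ : V} (hu₀ : cl u₀ = S)
    (hv₀ : cl v₀ = T) (h : F.Reachable u₀ v₀) (u v : V) (huv : cl' u = cl' v) :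
    F.Reachable u v := by
  rw [hmerge, hmerge] at huv
  split_ifs at huv with hu hv hv
  · exact hcl u v (hu.trans hv.symm)
  · exact ((hcl u v₀ (hu.trans hv₀.symm)).trans h.symm).trans (hcl u₀ v (hu₀.trans huv))
  · exact ((hcl u u₀ (huv.trans hu₀.symm)).trans h).trans (hcl v₀ v (hv₀.trans hv.symm))
  · exact hcl u v huv

section Run

variable {V : Type*} [Fintype V] {d : V → V → ℝ} {w : Sym2 V → ℝ} {D : Finset (V × V)}
  {Fs : SimpleGraph V}

lemma pDist_le_widthAt {ι : Type*} (cl : V → ι) (hd : ∀ u v, 0 ≤ d u v)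
    (hwd : ∀ u v : V, w s(u, v) = d u v) (hsol : ∀ p ∈ D, Fs.Reachable p.1 p.2) {x y : V}
    (hxy : (x, y) ∈ D ∨ (y, x) ∈ D) : pDist d cl x y ≤ widthAt Fs w D x := by
  rcases hxy with h | h
  · exact (pDist_le_treeDist cl hd hwd (hsol _ h)).trans (treeDist_le_compWidth h)
  · have hyx : Fs.Reachable y x := hsol _ h
    rw [widthAt, ← ConnectedComponent.eq.mpr hyx]
    exact (pDist_le_treeDist cl hd hwd hyx.symm).trans
      ((treeDist_comm x y).trans_le (treeDist_le_compWidth h))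

/-- Each merged supernode contains a terminal whose mate lies in another active supernode, so the
greedy choice costs at most the width of that terminal's tree. -/
lemma GRun.exists_superDist_le_widthAt (R : GRun V d D) (hd : ∀ u v, 0 ≤ d u v)
    (hwd : ∀ u v : V, w s(u, v) = d u v) (hsol : ∀ p ∈ D, Fs.Reachable p.1 p.2) {t : ℕ}
    (ht : t < R.steps) {i : ℕ} (hi : isActive D (R.cl t) i) :
    ∃ x, R.cl t x = i ∧ superDist d (R.cl t) (R.S t) (R.T t) ≤ widthAt Fs w D x := by
  obtain ⟨x, y, hxy, hx, hy⟩ :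
      ∃ x y, ((x, y) ∈ D ∨ (y, x) ∈ D) ∧ R.cl t x = i ∧ R.cl t y ≠ i := by
    obtain ⟨p, hp, ⟨h₁, h₂⟩ | ⟨h₂, h₁⟩⟩ := hi
    · exact ⟨p.1, p.2, .inl hp, h₁, h₂⟩
    · exact ⟨p.2, p.1, .inr hp, h₂, h₁⟩
  have hy_active : isActive D (R.cl t) (R.cl t y) := by
    rcases hxy with h | h
    · exact ⟨_, h, .inr ⟨rfl, hx ▸ fun h' => hy h'.symm⟩⟩
    · exact ⟨_, h, .inl ⟨rfl, hx ▸ fun h' => hy h'.symm⟩⟩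
  refine ⟨x, hx, ?_⟩
  calc superDist d (R.cl t) (R.S t) (R.T t)
      ≤ superDist d (R.cl t) (R.cl t x) (R.cl t y) :=
        R.min_dist t ht _ _ (hx ▸ hi) hy_active (hx ▸ fun h => hy h.symm)
    _ ≤ pDist d (R.cl t) x y := superDist_le_pDist x y
    _ ≤ widthAt Fs w D x := pDist_le_widthAt _ hd hwd hsol hxy

lemma GRun.exists_augmentation_succ (R : GRun V d D) (hd : ∀ u v, 0 ≤ d u v)
    (hwd : ∀ u v : V, w s(u, v) = d u v) (hsol : ∀ p ∈ D, Fs.Reachable p.1 p.2) {t : ℕ}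
    (ht : t < R.steps) (A : Augmentation w D Fs)
    (hA : ∀ u v, R.cl t u = R.cl t v → A.F.Reachable u v) :
    ∃ B : Augmentation w D Fs,
      ∀ u v, R.cl (t + 1) u = R.cl (t + 1) v → B.F.Reachable u v := by
  suffices h : ∃ B : Augmentation w D Fs, A.F ≤ B.F ∧
      ∃ u v, R.cl t u = R.S t ∧ R.cl t v = R.T t ∧ B.F.Reachable u v by
    obtain ⟨B, hAB, u, v, hu, hv, huv⟩ := h
    exact ⟨B, reachable_of_merge (fun u v h => (hA u v h).mono hAB) (R.merge t ht) hu hv huv⟩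
  by_cases hconn : ∃ u v, R.cl t u = R.S t ∧ R.cl t v = R.T t ∧ A.F.Reachable u v
  · exact ⟨A, le_rfl, hconn⟩
  simp only [not_exists, not_and] at hconn
  obtain ⟨x, hx, hxw⟩ := R.exists_superDist_le_widthAt hd hwd hsol ht (R.activeS t ht)
  obtain ⟨y, hy, hyw⟩ := R.exists_superDist_le_widthAt hd hwd hsol ht (R.activeT t ht)
  obtain ⟨l, u, v, hu, hv, hhead, hlast, hl⟩ :=
    exists_chain_eq_superDist hd ⟨x, hx⟩ ⟨y, hy⟩
  have hH := gcost_fromEdgeSet_chainEdges_le (cl := R.cl t) (w := w) hd hwd l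
  have huv := reachable_sup_fromEdgeSet_chainEdges hA hhead hlast
  obtain ⟨B, hB⟩ := A.exists_extend (weight_nonneg hd hwd) _ huv (hconn u v hu hv)
    ⟨x, hA u x (hu.trans hx.symm), by linarith⟩ ⟨y, hA v y (hv.trans hy.symm), by linarith⟩
  exact ⟨B, hB ▸ le_sup_left, u, v, hu, hv, hB ▸ huv⟩

lemma GRun.exists_augmentation (R : GRun V d D) (hd : ∀ u v, 0 ≤ d u v)
    (hwd : ∀ u v : V, w s(u, v) = d u v) (hsol : ∀ p ∈ D, Fs.Reachable p.1 p.2) :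
    ∀ t ≤ R.steps, ∃ A : Augmentation w D Fs,
      ∀ u v, R.cl t u = R.cl t v → A.F.Reachable u v
  | 0, _ => ⟨.initial, fun u v h => R.init u v h ▸ .rfl⟩
  | t + 1, ht => by
      obtain ⟨A, hA⟩ := R.exists_augmentation hd hwd hsol t (by omega)
      exact R.exists_augmentation_succ hd hwd hsol ht A hA

end Run

theorem exists_faithful_near_optimal_solution_general {V : Type*} [Fintype V]
    (d : V → V → ℝ) (hd : ∀ u v, 0 ≤ d u v)
    (w : Sym2 V → ℝ) (hwd : ∀ u v : V, w s(u, v) = d u v)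
    (D : Finset (V × V))
    (R : GRun V d D)
    (Fs : SimpleGraph V)
    (hFssol : ∀ p ∈ D, Fs.Reachable p.1 p.2) :
    ∃ Fss : SimpleGraph V,
      (∀ p ∈ D, Fss.Reachable p.1 p.2) ∧
      gcost w Fss ≤ gcost w Fs + gwidth w Fs D ∧
      gcost w Fss ≤ 2 * gcost w Fs ∧
      (∀ u v : V, R.cl R.steps u = R.cl R.steps v → Fss.Reachable u v) := by
  obtain ⟨A, hA⟩ := R.exists_augmentation hd hwd hFssol R.steps le_rfl
  have hw := weight_nonneg hd hwd
  have hcost : gcost w A.F ≤ gcost w Fs + gwidth w Fs D := by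
    linarith [A.cost_add_le,
      Finset.sum_nonneg fun c (_ : c ∈ A.U) => compWidth_nonneg (D := D) hw c]
  refine ⟨A.F, fun p hp => hA _ _ ?_, hcost, by linarith [gwidth_le_gcost hw hFssol], hA⟩
  by_contra h
  exact R.final _ ⟨p, hp, .inl ⟨rfl, Ne.symm h⟩⟩

/-- Given an optimal Steiner forest `F*` and the final clustering `C^f` of the
gluttonous algorithm, there is a feasible solution `F**` with
`cost(F**) ≤ cost(F*) + width(F*) ≤ 2·cost(F*)` which is faithful to `C^f`:
every supernode of `C^f` is contained in a single tree of `F**`. -/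
theorem exists_faithful_near_optimal_solution {V : Type*} [Fintype V] [DecidableEq V]
    (d : V → V → ℝ) (hd : ∀ u v, 0 ≤ d u v) (hdsymm : ∀ u v, d u v = d v u)
    (w : Sym2 V → ℝ) (hwd : ∀ u v : V, w s(u, v) = d u v)
    (D : Finset (V × V))
    (R : GRun V d D)
    (Fs : SimpleGraph V) (hFsforest : Fs.IsAcyclic)
    (hFssol : ∀ p ∈ D, Fs.Reachable p.1 p.2)
    (hopt : ∀ F : SimpleGraph V, (∀ p ∈ D, F.Reachable p.1 p.2) →
      gcost w Fs ≤ gcost w F) :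
    ∃ Fss : SimpleGraph V,
      (∀ p ∈ D, Fss.Reachable p.1 p.2) ∧
      gcost w Fss ≤ gcost w Fs + gwidth w Fs D ∧
      gcost w Fss ≤ 2 * gcost w Fs ∧
      (∀ u v : V, R.cl R.steps u = R.cl R.steps v → Fss.Reachable u v) :=
  exists_faithful_near_optimal_solution_general d hd w hwd D R Fs hFssol
end

section
/- During the maintenance of the candidate forest with edge potentials, at every iteration t the sum of potentials of the deleted edges del(t) plus the potentials of edges of the current tree τ(t) equals cost(T*), and π(e) ≥ length(e) for every edge e in τ(t) ∪ del(t). -/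
/-- A step of the candidate-forest maintenance process.  An edge is recorded as a pair
`(length, potential)`.  The state is `(τ, del)`: the multiset of edges of the current
tree and the multiset of deleted edges.  A step either deletes an edge of the tree
(moving it to `del`), or short-cuts two edges `e', e''` of the tree into a new edge
whose length is at most `length e' + length e''` (triangle inequality) and whose
potential is `potential e' + potential e''`. -/
inductive ForestStep :
    Multiset (ℝ × ℝ) × Multiset (ℝ × ℝ) → Multiset (ℝ × ℝ) × Multiset (ℝ × ℝ) → Prop
  | delete (τ del : Multiset (ℝ × ℝ)) (e : ℝ × ℝ) (h : e ∈ τ) :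
      ForestStep (τ, del) (τ.erase e, e ::ₘ del)
  | shortcut (τ del : Multiset (ℝ × ℝ)) (e' e'' : ℝ × ℝ)
      (h' : e' ∈ τ) (h'' : e'' ∈ τ.erase e') (ℓ : ℝ) (hℓ : ℓ ≤ e'.1 + e''.1) :
      ForestStep (τ, del) ((ℓ, e'.2 + e''.2) ::ₘ (τ.erase e').erase e'', del)

/-- Invariant of the candidate forest with edge potentials: starting from the tree `T*`
with `π(e) = length(e)` for every edge, at every iteration the sum of potentials of the
deleted edges plus the potentials of the edges of the current tree equals `cost(T*)`,
and `π(e) ≥ length(e)` for every edge of the current tree and every deleted edge. -/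
theorem potential_invariant (τ₀ : Multiset (ℝ × ℝ))
    (hinit : ∀ e ∈ τ₀, e.2 = e.1)
    (τ del : Multiset (ℝ × ℝ))
    (hreach : Relation.ReflTransGen ForestStep (τ₀, 0) (τ, del)) :
    (τ.map Prod.snd).sum + (del.map Prod.snd).sum = (τ₀.map Prod.fst).sum ∧
      ∀ e ∈ τ + del, e.1 ≤ e.2 := by
  have key : ∀ p : Multiset (ℝ × ℝ) × Multiset (ℝ × ℝ),
      Relation.ReflTransGen ForestStep (τ₀, 0) p →
      (p.1.map Prod.snd).sum + (p.2.map Prod.snd).sum = (τ₀.map Prod.fst).sum ∧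
        ∀ e ∈ p.1 + p.2, e.1 ≤ e.2 := by
    intro p h
    induction h with
    | refl =>
      refine ⟨by simp [Multiset.map_congr rfl hinit], ?_⟩
      intro e he
      simp only [add_zero] at he
      exact le_of_eq (hinit e he).symm
    | tail _ hbc ih =>
      cases hbc with
      | delete τ' del' e he =>
        obtain ⟨hsum, hle⟩ := ih
        constructor
        · have h1 : (τ'.map Prod.snd).sum = e.2 + ((τ'.erase e).map Prod.snd).sum := by
            conv_lhs => rw [← Multiset.cons_erase he]
            simp
          simp only [Multiset.map_cons, Multiset.sum_cons]
          linarith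
        · intro f hf
          simp only [Multiset.mem_add, Multiset.mem_cons] at hf
          rcases hf with hf | hf | hf
          · exact hle f (Multiset.mem_add.2 (Or.inl (Multiset.mem_of_mem_erase hf)))
          · exact hle f (Multiset.mem_add.2 (Or.inl (hf ▸ he)))
          · exact hle f (Multiset.mem_add.2 (Or.inr hf))
      | shortcut τ' del' e' e'' h' h'' ℓ hℓ =>
        obtain ⟨hsum, hle⟩ := ih
        have hτ : (τ'.map Prod.snd).sum
            = e'.2 + (e''.2 + (((τ'.erase e').erase e'').map Prod.snd).sum) := by
          conv_lhs => rw [← Multiset.cons_erase h', ← Multiset.cons_erase h'']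
          simp
        constructor
        · simp only [Multiset.map_cons, Multiset.sum_cons]
          linarith
        · intro f hf
          simp only [Multiset.mem_add, Multiset.mem_cons] at hf
          rcases hf with (hf | hf) | hf
          · subst hf
            have h1 := hle e' (Multiset.mem_add.2 (Or.inl h'))
            have h2 := hle e'' (Multiset.mem_add.2 (Or.inl (Multiset.mem_of_mem_erase h'')))
            simpa using le_trans hℓ (add_le_add h1 h2)
          · exact hle f (Multiset.mem_add.2 (Or.inl
              (Multiset.mem_of_mem_erase (Multiset.mem_of_mem_erase hf))))
          · exact hle f (Multiset.mem_add.2 (Or.inr hf))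
  exact key (τ, del) hreach
end

section
/- Suppose positive reals Δ_t indexed by a finite set I^r of iterations, and a finite multiset D of edges with potentials π(e) ≥ 0, satisfy: for each t ∈ I^r there are at least N_t/8 edges in D with potential at least Δ_t/6, where N_t bounds the number of iterations t' ∈ I^r with Δ_{t'} ≥ Δ_t (the Δ's being sorted appropriately). Then Σ_{t ∈ I^r} Δ_t ≤ 48 · Σ_{e ∈ D} π(e). -/
open scoped Classical

/-- For any finset `s` and `k ≤ s.card`, there is a "top-k" subset `T` of `s`
with respect to `f`. -/
lemma exists_top_subset {ι : Type*} (f : ι → ℝ) :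
    ∀ (k : ℕ) (s : Finset ι), k ≤ s.card →
      ∃ T ⊆ s, T.card = k ∧ ∀ t ∈ T, ∀ t' ∈ s \ T, f t' ≤ f t := by
  intro k
  induction k with
  | zero =>
    intro s _
    exact ⟨∅, Finset.empty_subset s, Finset.card_empty, by simp⟩
  | succ k ih =>
    intro s hk
    obtain ⟨T, hTs, hTcard, hTtop⟩ := ih s (Nat.le_of_succ_le hk)
    have hne : (s \ T).Nonempty := by
      rw [← Finset.card_pos, Finset.card_sdiff_of_subset hTs]
      omega
    obtain ⟨m, hm, hmax⟩ := Finset.exists_max_image (s \ T) f hne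
    have hmT : m ∉ T := (Finset.mem_sdiff.mp hm).2
    refine ⟨insert m T, ?_, ?_, ?_⟩
    · exact Finset.insert_subset (Finset.mem_sdiff.mp hm).1 hTs
    · rw [Finset.card_insert_of_notMem hmT, hTcard]
    · intro t ht t' ht'
      have ht'sub : t' ∈ s \ T := by
        rw [Finset.mem_sdiff] at ht' ⊢
        exact ⟨ht'.1, fun h => ht'.2 (Finset.mem_insert_of_mem h)⟩
      rcases Finset.mem_insert.mp ht with rfl | htT
      · exact hmax t' ht'sub
      · exact hTtop t htT t' ht'sub

/-- Auxiliary induction lemma for the charging argument. -/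
lemma charging_aux {ι E : Type*} (Δ : ι → ℝ) (hΔ : ∀ t, 0 < Δ t)
    (π : E → ℝ) (hπ : ∀ e, 0 ≤ π e) :
    ∀ (n : ℕ) (s : Finset ι) (D : Finset E), s.card = n →
      (∀ t ∈ s, (s.filter (fun t' => Δ t ≤ Δ t')).card ≤
          8 * (D.filter (fun e => Δ t / 6 ≤ π e)).card) →
      ∑ t ∈ s, Δ t ≤ 48 * ∑ e ∈ D, π e := by
  intro n
  induction n using Nat.strong_induction_on with
  | _ n ih =>
    intro s D hcard hhyp
    rcases s.eq_empty_or_nonempty with rfl | hne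
    · simp only [Finset.sum_empty]
      have : (0:ℝ) ≤ ∑ e ∈ D, π e := Finset.sum_nonneg fun e _ => hπ e
      linarith
    obtain ⟨t₁, ht₁s, ht₁max⟩ := Finset.exists_max_image s Δ hne
    -- there is an edge e₀ with π e₀ ≥ Δ t₁ / 6
    have h1 : 1 ≤ (s.filter (fun t' => Δ t₁ ≤ Δ t')).card := by
      rw [Nat.one_le_iff_ne_zero, Ne, Finset.card_eq_zero, ← Finset.not_nonempty_iff_eq_empty,
        not_not]
      exact ⟨t₁, Finset.mem_filter.mpr ⟨ht₁s, le_refl _⟩⟩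
    have hS1 : 1 ≤ (D.filter (fun e => Δ t₁ / 6 ≤ π e)).card := by
      have := hhyp t₁ ht₁s
      omega
    obtain ⟨e₀, he₀⟩ := Finset.card_pos.mp hS1
    have he₀D : e₀ ∈ D := (Finset.mem_filter.mp he₀).1
    have he₀π : Δ t₁ / 6 ≤ π e₀ := (Finset.mem_filter.mp he₀).2
    by_cases hsmall : s.card ≤ 8
    · -- small case: charge everything to e₀
      have hsum : ∑ t ∈ s, Δ t ≤ s.card • Δ t₁ :=
        Finset.sum_le_card_nsmul s Δ (Δ t₁) (fun t ht => ht₁max t ht)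
      have h8 : (s.card : ℝ) • Δ t₁ ≤ 8 * Δ t₁ := by
        rw [smul_eq_mul]
        have : (s.card : ℝ) ≤ 8 := by exact_mod_cast hsmall
        nlinarith [hΔ t₁]
      have hle : π e₀ ≤ ∑ e ∈ D, π e :=
        Finset.single_le_sum (fun e _ => hπ e) he₀D
      have : ∑ t ∈ s, Δ t ≤ 8 * Δ t₁ := by
        calc ∑ t ∈ s, Δ t ≤ s.card • Δ t₁ := hsum
        _ = (s.card : ℝ) • Δ t₁ := by rw [nsmul_eq_mul, smul_eq_mul]
        _ ≤ 8 * Δ t₁ := h8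
      linarith
    · -- big case: strip the top 8 iterations, charge them to e₀, recurse
      push_neg at hsmall
      obtain ⟨T, hTs, hTcard, hTtop⟩ := exists_top_subset Δ 8 s (by omega)
      set s' := s \ T with hs'
      set D' := D.erase e₀ with hD'
      have hs'card : s'.card = s.card - 8 := by
        rw [hs', Finset.card_sdiff_of_subset hTs, hTcard]
      have hlt : s'.card < n := by omega
      -- verify the hypothesis for (s', D')
      have hhyp' : ∀ t ∈ s', (s'.filter (fun t' => Δ t ≤ Δ t')).card ≤
          8 * (D'.filter (fun e => Δ t / 6 ≤ π e)).card := by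
        intro t hts'
        have hts : t ∈ s := (Finset.mem_sdiff.mp hts').1
        -- T is contained in the filter of s, disjoint from filter of s'
        have hsub : (s'.filter (fun t' => Δ t ≤ Δ t')) ∪ T ⊆
            s.filter (fun t' => Δ t ≤ Δ t') := by
          intro x hx
          rcases Finset.mem_union.mp hx with hx | hx
          · obtain ⟨hxs', hxΔ⟩ := Finset.mem_filter.mp hx
            exact Finset.mem_filter.mpr ⟨(Finset.mem_sdiff.mp hxs').1, hxΔ⟩
          · exact Finset.mem_filter.mpr ⟨hTs hx, hTtop x hx t hts'⟩
        have hdisj : Disjoint (s'.filter (fun t' => Δ t ≤ Δ t')) T := by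
          apply Finset.disjoint_left.mpr
          intro x hx hxT
          exact (Finset.mem_sdiff.mp (Finset.mem_filter.mp hx).1).2 hxT
        have hcount : (s'.filter (fun t' => Δ t ≤ Δ t')).card + 8 ≤
            (s.filter (fun t' => Δ t ≤ Δ t')).card := by
          have := Finset.card_le_card hsub
          rwa [Finset.card_union_of_disjoint hdisj, hTcard] at this
        have herase : (D.filter (fun e => Δ t / 6 ≤ π e)).card ≤
            (D'.filter (fun e => Δ t / 6 ≤ π e)).card + 1 := by
          rw [hD', Finset.filter_erase]
          by_cases h : e₀ ∈ D.filter (fun e => Δ t / 6 ≤ π e)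
          · rw [Finset.card_erase_of_mem h]; omega
          · rw [Finset.erase_eq_of_notMem h]; omega
        have := hhyp t hts
        omega
      have hrec : ∑ t ∈ s', Δ t ≤ 48 * ∑ e ∈ D', π e :=
        ih s'.card hlt s' D' rfl hhyp'
      -- bound the cost of the removed iterations
      have hTsum : ∑ t ∈ T, Δ t ≤ 8 * Δ t₁ := by
        have : ∑ t ∈ T, Δ t ≤ T.card • Δ t₁ :=
          Finset.sum_le_card_nsmul T Δ (Δ t₁) (fun t ht => ht₁max t (hTs ht))
        rw [hTcard] at this
        calc ∑ t ∈ T, Δ t ≤ 8 • Δ t₁ := this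
        _ = 8 * Δ t₁ := by rw [nsmul_eq_mul]; norm_num
      have hsplit : ∑ t ∈ s', Δ t + ∑ t ∈ T, Δ t = ∑ t ∈ s, Δ t :=
        Finset.sum_sdiff hTs
      have hDsplit : ∑ e ∈ D', π e + π e₀ = ∑ e ∈ D, π e :=
        Finset.sum_erase_add D π he₀D
      have : 8 * Δ t₁ ≤ 48 * π e₀ := by linarith
      linarith

/-- Abstract charging lemma.  Let `Δ t > 0` be the merging costs of a finite set of
iterations and let `D` be a finite set of edges with potentials `π e ≥ 0`.  Suppose
that for each iteration `t`, with `N t` an upper bound on the number of iterations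
`t'` with `Δ t' ≥ Δ t`, there are at least `N t / 8` edges of `D` with potential at
least `Δ t / 6`.  Then `Σ_t Δ t ≤ 48 · Σ_{e ∈ D} π e`. -/
theorem charging_lemma {ι E : Type*} [Fintype ι] (Δ : ι → ℝ) (hΔ : ∀ t, 0 < Δ t)
    (D : Finset E) (π : E → ℝ) (hπ : ∀ e, 0 ≤ π e)
    (N : ι → ℕ)
    (hN : ∀ t, (Finset.univ.filter (fun t' => Δ t ≤ Δ t')).card ≤ N t)
    (hedge : ∀ t, N t ≤ 8 * (D.filter (fun e => Δ t / 6 ≤ π e)).card) :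
    ∑ t, Δ t ≤ 48 * ∑ e ∈ D, π e := by
  exact charging_aux Δ hΔ π hπ (Finset.univ.card) Finset.univ D rfl
    (fun t _ => le_trans (hN t) (hedge t))
end

section
/- If the merging step of a gluttonous-type algorithm assigns charges by charge(S) = charge(S') + charge(S'') − (2|alive(S')∩alive(S'')| − 1)·δ_t when merging S', S'' into S, with δ_t non-decreasing in t and n(S) ≥ n(S') + n(S'') − 2|alive(S')∩alive(S'')|, then the invariant charge(S) ≤ (n(S)−1)·δ_t for active S and charge(S) ≤ 0 for inactive S (with n(S)=0) is maintained by induction, starting from charge = 0 and n = 1 for singletons. -/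
/-- The charge invariant for the abstract accounting of the gluttonous algorithm.
The state at each iteration is a multiset of supernodes recorded as pairs
`(charge S, n S)` with `n S = |alive S|`.  Initially every supernode is a singleton
with charge `0` and `n = 1`.  At iteration `t`, either nothing happens, or two active
supernodes `p, q` (with `n ≥ 1`) are merged into `r` where, with
`a = |alive(S') ∩ alive(S'')|` (so `a ≤ n p`, `a ≤ n q` and
`n r ≥ n p + n q − 2a`), the new charge is
`charge r = charge p + charge q − (2a − 1)·δ t`.  If `δ` is positive and
non-decreasing, then at every iteration every supernode `S` satisfies
`charge S ≤ (n S − 1)·δ t` if `S` is active and `charge S ≤ 0` if `S` is inactive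
(`n S = 0`). -/
theorem charge_invariant
    (state : ℕ → Multiset (ℝ × ℕ)) (δ : ℕ → ℝ)
    (hδpos : ∀ t, 0 < δ t) (hδmono : Monotone δ)
    (hinit : ∀ p ∈ state 0, p = ((0 : ℝ), (1 : ℕ)))
    (hstep : ∀ t : ℕ, state (t + 1) = state t ∨
      ∃ (p q r : ℝ × ℕ) (a : ℕ),
        p ∈ state t ∧ q ∈ (state t).erase p ∧
        1 ≤ p.2 ∧ 1 ≤ q.2 ∧ a ≤ p.2 ∧ a ≤ q.2 ∧
        p.2 + q.2 ≤ r.2 + 2 * a ∧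
        r.1 = p.1 + q.1 - (2 * (a : ℝ) - 1) * δ t ∧
        state (t + 1) = r ::ₘ ((state t).erase p).erase q) :
    ∀ t : ℕ, ∀ s ∈ state t,
      (1 ≤ s.2 → s.1 ≤ ((s.2 : ℝ) - 1) * δ t) ∧ (s.2 = 0 → s.1 ≤ 0) := by
  intro t
  induction t with
  | zero =>
    intro s hs
    have h := hinit s hs
    subst h
    refine ⟨fun _ => by simp, fun h0 => by simp at h0⟩
  | succ t ih =>
    have hd : δ t ≤ δ (t + 1) := hδmono (Nat.le_succ t)
    have hcarry : ∀ s ∈ state t,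
        (1 ≤ s.2 → s.1 ≤ ((s.2 : ℝ) - 1) * δ (t+1)) ∧ (s.2 = 0 → s.1 ≤ 0) := by
      intro s hs
      obtain ⟨h1, h2⟩ := ih s hs
      refine ⟨fun hn => ?_, h2⟩
      have hge : (1 : ℝ) ≤ (s.2 : ℝ) := by exact_mod_cast hn
      have := mul_le_mul_of_nonneg_left hd (by linarith : (0:ℝ) ≤ (s.2:ℝ) - 1)
      linarith [h1 hn]
    intro s hs
    rcases hstep t with heq | ⟨p, q, r, a, hp, hq, hp2, hq2, hap, haq, hsum, hr1, hst⟩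
    · rw [heq] at hs
      exact hcarry s hs
    · rw [hst, Multiset.mem_cons] at hs
      rcases hs with rfl | hs
      · have hq' : q ∈ state t := Multiset.mem_of_mem_erase hq
        have hbp := (ih p hp).1 hp2
        have hbq := (ih q hq').1 hq2
        have hsum' : (p.2 : ℝ) + (q.2 : ℝ) ≤ (s.2 : ℝ) + 2 * (a : ℝ) := by
          exact_mod_cast hsum
        have hδt := hδpos t
        have key : s.1 ≤ ((s.2 : ℝ) - 1) * δ t := by
          rw [hr1]; nlinarith
        constructor
        · intro hn
          have hge : (1 : ℝ) ≤ (s.2 : ℝ) := by exact_mod_cast hn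
          have := mul_le_mul_of_nonneg_left hd (by linarith : (0:ℝ) ≤ (s.2:ℝ) - 1)
          linarith
        · intro h0
          rw [h0] at key
          push_cast at key
          linarith
      · exact hcarry s (Multiset.mem_of_mem_erase (Multiset.mem_of_mem_erase hs))
end
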